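/- For every x with 0 < x ≤ 0.004, the standard Gaussian upper-quantile satisfies Φ̄^{−1}(x) ≥ √(log(1/x)). -/
import Mathlib


open Real

/-- Standard normal density. -/
noncomputable def gphi (t : ℝ) : ℝ := (Real.sqrt (2 * Real.pi))⁻¹ * Real.exp (-(t ^ 2) / 2)

/-- Standard normal upper-tail (survival) function. -/
noncomputable def Phibar (t : ℝ) : ℝ := ∫ s in Set.Ioi t, gphi s

/-- Inverse of the standard normal upper-tail function. -/
noncomputable def PhibarInv (x : ℝ) : ℝ := Function.invFun Phibar x

namespace GaussAux

open MeasureTheory Set Filter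

lemma gphi_pos (t : ℝ) : 0 < gphi t := by unfold gphi; positivity

lemma gphi_eq : gphi = fun s => (Real.sqrt (2 * Real.pi))⁻¹ * Real.exp (-(1/2) * s ^ 2) := by
  funext s; unfold gphi; congr 1; exact congrArg Real.exp (by ring)

lemma gphi_integrable : Integrable gphi := by
  rw [gphi_eq]; exact (integrable_exp_neg_mul_sq (by norm_num)).const_mul _

lemma gphi_continuous : Continuous gphi := by rw [gphi_eq]; fun_prop

lemma Phibar_split {a b : ℝ} (h : a ≤ b) :
    Phibar a = (∫ s in a..b, gphi s) + Phibar b := by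
  unfold Phibar
  rw [intervalIntegral.integral_of_le h,
    ← MeasureTheory.setIntegral_union (Set.Ioc_disjoint_Ioi le_rfl) measurableSet_Ioi
      gphi_integrable.integrableOn gphi_integrable.integrableOn,
    Set.Ioc_union_Ioi_eq_Ioi h]

lemma Phibar_strictAnti : StrictAnti Phibar := by
  intro a b hab
  have h := Phibar_split hab.le
  have hpos : 0 < ∫ s in a..b, gphi s :=
    intervalIntegral.intervalIntegral_pos_of_pos_on (gphi_continuous.intervalIntegrable a b)
      (fun s _ => gphi_pos s) hab
  linarith

lemma Phibar_eq (t : ℝ) : Phibar t = Phibar 0 - ∫ s in (0:ℝ)..t, gphi s := by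
  rcases le_total 0 t with h | h
  · have := Phibar_split h; linarith
  · have := Phibar_split h
    rw [intervalIntegral.integral_symm] at this
    linarith

lemma Phibar_continuous : Continuous Phibar := by
  have h : Continuous fun t => ∫ s in (0:ℝ)..t, gphi s :=
    intervalIntegral.continuous_primitive (fun a b => gphi_continuous.intervalIntegrable a b) 0
  exact (continuous_const.sub h).congr fun t => (Phibar_eq t).symm

lemma Phibar_tendsto : Tendsto Phibar atTop (nhds 0) := by
  have h : Tendsto (fun t => ∫ s in (0:ℝ)..t, gphi s) atTop (nhds (Phibar 0)) :=
    intervalIntegral_tendsto_integral_Ioi 0 gphi_integrable.integrableOn tendsto_id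
  have h2 : Tendsto (fun t => Phibar 0 - ∫ s in (0:ℝ)..t, gphi s) atTop
      (nhds (Phibar 0 - Phibar 0)) := tendsto_const_nhds.sub h
  rw [sub_self] at h2
  exact h2.congr fun t => (Phibar_eq t).symm

lemma Phibar_lb (t : ℝ) : gphi (t + 2/5) * (292/375) ≤ Phibar t := by
  set m := t + 2/5 with hm
  have hpt : ∀ s : ℝ, gphi m * (1 + (m^2 - s^2)/2) ≤ gphi s := by
    intro s
    have heq : gphi m * Real.exp ((m^2 - s^2)/2) = gphi s := by
      unfold gphi
      rw [mul_assoc, ← Real.exp_add]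
      congr 1
      exact congrArg Real.exp (by ring)
    have hle := Real.add_one_le_exp ((m^2 - s^2)/2)
    calc gphi m * (1 + (m^2 - s^2)/2) ≤ gphi m * Real.exp ((m^2 - s^2)/2) :=
          mul_le_mul_of_nonneg_left (by linarith) (gphi_pos m).le
      _ = gphi s := heq
  have h2 : (∫ s in t..(t+4/5), gphi m * (1 + (m^2 - s^2)/2)) ≤ ∫ s in t..(t+4/5), gphi s := by
    apply intervalIntegral.integral_mono_on (by linarith)
    · exact ((continuous_const.mul (by fun_prop)).intervalIntegrable _ _)
    · exact gphi_continuous.intervalIntegrable _ _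
    · exact fun s _ => hpt s
  have h3 : (∫ s in t..(t+4/5), gphi m * (1 + (m^2 - s^2)/2)) = gphi m * (292/375) := by
    rw [intervalIntegral.integral_const_mul]
    congr 1
    have e1 : (fun s : ℝ => 1 + (m^2 - s^2)/2) = fun s : ℝ => (1 + m^2/2) - s^2/2 := by
      funext s; ring
    rw [e1, intervalIntegral.integral_sub (intervalIntegrable_const)
      ((by fun_prop : Continuous fun s : ℝ => s^2/2).intervalIntegrable _ _),
      intervalIntegral.integral_const, intervalIntegral.integral_div, integral_pow]
    simp only [hm, smul_eq_mul]
    ring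
  have h4 : (∫ s in t..(t+4/5), gphi s) ≤ Phibar t := by
    rw [intervalIntegral.integral_of_le (by linarith)]
    unfold Phibar
    exact setIntegral_mono_set gphi_integrable.integrableOn
      (ae_of_all _ fun s => (gphi_pos s).le) (Set.Ioc_subset_Ioi_self).eventuallyLE
  linarith

lemma sqrt_two_pi_le : Real.sqrt (2 * Real.pi) ≤ 2.5067 := by
  rw [Real.sqrt_le_iff]
  constructor
  · norm_num
  · nlinarith [Real.pi_lt_d6]

lemma sqrt_two_pi_pos : 0 < Real.sqrt (2 * Real.pi) :=
  Real.sqrt_pos.mpr (by positivity)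

end GaussAux

theorem gaussian_quantile_lower_bound (x : ℝ) (hx0 : 0 < x) (hx : x ≤ 0.004) :
    PhibarInv x ≥ Real.sqrt (Real.log (1 / x)) := by
  open GaussAux in
  set t := Real.sqrt (Real.log (1 / x)) with ht_def
  have hxinv : (250:ℝ) ≤ 1 / x := by
    rw [le_div_iff₀ hx0]; linarith
  have hL0 : (0:ℝ) ≤ Real.log (1 / x) := Real.log_nonneg (by linarith)
  have h250 : Real.exp 5.5 ≤ 250 := by
    have h2 : Real.exp 5.5 ^ 2 = Real.exp 1 ^ 11 := by
      rw [← Real.exp_nat_mul, ← Real.exp_nat_mul]; norm_num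
    have h3 : Real.exp 1 ^ 11 ≤ 2.7182818286 ^ 11 :=
      pow_le_pow_left₀ (Real.exp_pos 1).le Real.exp_one_lt_d9.le 11
    have h4 : (2.7182818286:ℝ) ^ 11 ≤ 250 ^ 2 := by norm_num
    have h5 : Real.exp 5.5 ^ 2 ≤ 250 ^ 2 := by rw [h2]; linarith
    exact le_of_pow_le_pow_left₀ two_ne_zero (by norm_num) h5
  have hL : (5.5:ℝ) ≤ Real.log (1 / x) := by
    have h1 : (5.5:ℝ) ≤ Real.log 250 := (Real.le_log_iff_exp_le (by norm_num)).mpr h250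
    have h2 : Real.log 250 ≤ Real.log (1 / x) := Real.log_le_log (by norm_num) hxinv
    linarith
  have ht : (2.34:ℝ) ≤ t := by
    rw [ht_def, Real.le_sqrt (by norm_num) hL0]
    nlinarith
  have ht2 : t ^ 2 = Real.log (1 / x) := Real.sq_sqrt hL0
  have hx_eq : x = Real.exp (-(t ^ 2)) := by
    rw [ht2, one_div, Real.log_inv, neg_neg, Real.exp_log hx0]
  -- the key tail bound : x ≤ Phibar t
  have hexpE : (3.4596:ℝ) ≤ Real.exp (t ^ 2 - (t + 2/5) ^ 2 / 2) := by
    have hE : (1.72:ℝ) ≤ t ^ 2 - (t + 2/5) ^ 2 / 2 := by nlinarith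
    have h1 : (1.86:ℝ) ≤ Real.exp 0.86 := by
      have := Real.add_one_le_exp (0.86:ℝ); norm_num at this ⊢; linarith
    have h2 : (3.4596:ℝ) ≤ Real.exp 1.72 := by
      have he : Real.exp 1.72 = Real.exp 0.86 * Real.exp 0.86 := by
        rw [← Real.exp_add]; norm_num
      nlinarith [Real.exp_pos (0.86:ℝ)]
    exact h2.trans (Real.exp_le_exp.mpr hE)
  have hkey : x ≤ Phibar t := by
    have hlb := Phibar_lb t
    have hrw : gphi (t + 2/5) * (292/375)
        = (Real.exp (-((t + 2/5) ^ 2) / 2) * (292/375)) / Real.sqrt (2 * Real.pi) := by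
      unfold gphi; ring
    have hg : Real.exp (-(t ^ 2)) ≤ gphi (t + 2/5) * (292/375) := by
      rw [hrw, le_div_iff₀ sqrt_two_pi_pos]
      have hsplit : Real.exp (-((t + 2/5) ^ 2) / 2)
          = Real.exp (-(t ^ 2)) * Real.exp (t ^ 2 - (t + 2/5) ^ 2 / 2) := by
        rw [← Real.exp_add]; congr 1; ring
      rw [hsplit]
      have hp := Real.exp_pos (-(t ^ 2))
      nlinarith [sqrt_two_pi_le, sqrt_two_pi_pos]
    rw [hx_eq]
    exact hg.trans hlb
  -- x is in the range of Phibar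
  have hx_le0 : x ≤ Phibar 0 := by
    have hlb := Phibar_lb 0
    have h1 : (0.92:ℝ) ≤ Real.exp (-(((0:ℝ) + 2/5) ^ 2) / 2) := by
      have := Real.add_one_le_exp (-(((0:ℝ) + 2/5) ^ 2) / 2)
      norm_num at this ⊢; linarith
    have hrw : gphi ((0:ℝ) + 2/5) * (292/375)
        = (Real.exp (-(((0:ℝ) + 2/5) ^ 2) / 2) * (292/375)) / Real.sqrt (2 * Real.pi) := by
      unfold gphi; ring
    rw [hrw] at hlb
    have h2 : (0.004:ℝ) ≤ (Real.exp (-(((0:ℝ) + 2/5) ^ 2) / 2) * (292/375)) / Real.sqrt (2 * Real.pi) := by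
      rw [le_div_iff₀ sqrt_two_pi_pos]
      nlinarith [sqrt_two_pi_le, sqrt_two_pi_pos]
    linarith
  obtain ⟨T, hTlt, hT0⟩ : ∃ T, Phibar T < x ∧ 0 ≤ T := by
    have h1 : ∀ᶠ b in Filter.atTop, Phibar b < x := Phibar_tendsto.eventually_lt_const hx0
    exact ((h1.and (Filter.eventually_ge_atTop 0)).exists)
  obtain ⟨u, _, hu⟩ := intermediate_value_Icc' hT0 Phibar_continuous.continuousOn
    ⟨hTlt.le, hx_le0⟩
  have hPinv : Phibar (PhibarInv x) = x := Function.invFun_eq ⟨u, hu⟩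
  by_contra hcon
  push_neg at hcon
  rw [ht_def] at hcon
  have hlt : Phibar t < Phibar (PhibarInv x) := Phibar_strictAnti hcon
  rw [hPinv] at hlt
  linarith
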